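/- For every τ with 0 < τ ≤ 2, every h > 0, and every η ∈ (0,1], one has Q_u(τ,h,η) ≤ 1, where Q_u(τ,h,η) = (exp(−4τη/h²) + (h/2)·(exp(−4τη/h²) − 1))² + (h²(1−η)/(4η))·(exp(−4τη/h²) − 1)². -/

import Mathlib

/-!
Write `E = exp (-4τη/h²)`. Clearing the denominator `4η`, the identity
`4η (1 - Q_u) = (1 - E) (4η (1 + E + hE) - h² (1 - E))` shows that `Q_u ≤ 1` as soon as
`h² (1 - E) ≤ 4η (1 + E)`. With `x = 4τη/h²` this reads `(1 - e⁻ˣ)/(1 + e⁻ˣ) ≤ x/τ`,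
which for `τ ≤ 2` follows from `tanh (x/2) ≤ x/2`.
-/

open Real

lemma add_one_mul_exp_neg_le_one (y : ℝ) : (y + 1) * exp (-y) ≤ 1 :=
  calc (y + 1) * exp (-y) ≤ exp y * exp (-y) := by gcongr; exact add_one_le_exp y
    _ = 1 := by rw [← exp_add, add_neg_cancel, exp_zero]

lemma monotone_sub_two_add_mul_exp_neg :
    Monotone fun t : ℝ => t - 2 + (t + 2) * exp (-t) := by
  refine monotone_of_hasDerivAt_nonneg (f' := fun y => 1 - (y + 1) * exp (-y)) (fun y => ?_)
    (fun y => sub_nonneg.2 (add_one_mul_exp_neg_le_one y))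
  have hexp : HasDerivAt (fun t : ℝ => exp (-t)) (-exp (-y)) y := by
    simpa using (hasDerivAt_neg y).exp
  exact (((hasDerivAt_id' y).sub_const 2).add
    (((hasDerivAt_id' y).add_const 2).mul hexp)).congr_deriv (by ring)

/-- The inequality `tanh (x / 2) ≤ x / 2` for `x ≥ 0`, with the denominators cleared. -/
lemma two_mul_one_sub_exp_neg_le {x : ℝ} (hx : 0 ≤ x) :
    2 * (1 - exp (-x)) ≤ x * (1 + exp (-x)) := by
  have := monotone_sub_two_add_mul_exp_neg hx
  simp only [neg_zero, exp_zero] at this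
  linarith

lemma upwind_growth_sq_le_one {E h η : ℝ} (hη : 0 < η) (hE : E ≤ 1)
    (hcrit : h ^ 2 * (1 - E) ≤ 4 * η * (1 + E + h * E)) :
    (E + h / 2 * (E - 1)) ^ 2 + h ^ 2 * (1 - η) / (4 * η) * (E - 1) ^ 2 ≤ 1 := by
  have hgap : 1 - ((E + h / 2 * (E - 1)) ^ 2 + h ^ 2 * (1 - η) / (4 * η) * (E - 1) ^ 2)
      = (1 - E) * (4 * η * (1 + E + h * E) - h ^ 2 * (1 - E)) / (4 * η) := by
    field_simp
    ring
  have hrhs : 0 ≤ (1 - E) * (4 * η * (1 + E + h * E) - h ^ 2 * (1 - E)) / (4 * η) := by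
    apply div_nonneg (mul_nonneg _ _) <;> linarith
  linarith

lemma sq_mul_one_sub_exp_le {τ h η : ℝ} (hτ : 0 ≤ τ) (hh : h ≠ 0) (hη : 0 ≤ η) :
    h ^ 2 * (1 - exp (-4 * τ * η / h ^ 2)) ≤ 2 * τ * η * (1 + exp (-4 * τ * η / h ^ 2)) := by
  have htanh := two_mul_one_sub_exp_neg_le (x := 4 * τ * η / h ^ 2) (by positivity)
  rw [neg_mul, neg_mul, neg_div]
  have hh2 : 0 < h ^ 2 := by positivity
  calc h ^ 2 * (1 - exp (-(4 * τ * η / h ^ 2)))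
      = h ^ 2 / 2 * (2 * (1 - exp (-(4 * τ * η / h ^ 2)))) := by ring
    _ ≤ h ^ 2 / 2 * (4 * τ * η / h ^ 2 * (1 + exp (-(4 * τ * η / h ^ 2)))) := by gcongr
    _ = 2 * τ * η * (1 + exp (-(4 * τ * η / h ^ 2))) := by field_simp; ring

theorem etdrk1_upwind_stability_tau_le_two_general
    (τ h η : ℝ) (hτ0 : 0 < τ) (hτ2 : τ ≤ 2) (hh : 0 < h)
    (hη0 : 0 < η) :
    (Real.exp (-4 * τ * η / h ^ 2) +
        (h / 2) * (Real.exp (-4 * τ * η / h ^ 2) - 1)) ^ 2 +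
      (h ^ 2 * (1 - η) / (4 * η)) * (Real.exp (-4 * τ * η / h ^ 2) - 1) ^ 2 ≤ 1 := by
  have hbound := sq_mul_one_sub_exp_le hτ0.le hh.ne' hη0.le
  set E := exp (-4 * τ * η / h ^ 2)
  have hE0 : 0 < E := exp_pos _
  have hE1 : E ≤ 1 := exp_le_one_iff.2 <| by
    rw [neg_mul, neg_mul, neg_div]; exact neg_nonpos.2 (by positivity)
  refine upwind_growth_sq_le_one hη0 hE1 ?_
  calc h ^ 2 * (1 - E) ≤ 2 * τ * η * (1 + E) := hbound
    _ ≤ 4 * η * (1 + E) := by gcongr; linarith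
    _ ≤ 4 * η * (1 + E + h * E) := by nlinarith [mul_pos (mul_pos hη0 hh) hE0]

/-- First half of the stability proof for the upwind ETD-RK1 scheme: for
`0 < τ ≤ 2`, `h > 0`, and `η ∈ (0,1]`, the squared growth-factor modulus
`Q_u(τ,h,η) = (exp(−4τη/h²) + (h/2)(exp(−4τη/h²) − 1))²
  + (h²(1−η)/(4η))(exp(−4τη/h²) − 1)²` is at most 1. -/
theorem etdrk1_upwind_stability_tau_le_two
    (τ h η : ℝ) (hτ0 : 0 < τ) (hτ2 : τ ≤ 2) (hh : 0 < h)
    (hη0 : 0 < η) (hη1 : η ≤ 1) :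
    (Real.exp (-4 * τ * η / h ^ 2) +
        (h / 2) * (Real.exp (-4 * τ * η / h ^ 2) - 1)) ^ 2 +
      (h ^ 2 * (1 - η) / (4 * η)) * (Real.exp (-4 * τ * η / h ^ 2) - 1) ^ 2 ≤ 1 :=
  etdrk1_upwind_stability_tau_le_two_general τ h η hτ0 hτ2 hh hη0
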